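/- arXiv:2011.04909 — 5 statements merged into one kernel-verified Lean document; each statement's English description precedes it below -/
import Mathlib

section
/- In an n-Cayley–Hamilton algebra R, an element r ∈ R is nilpotent if and only if σ_i(r) is nilpotent for every i with 1 ≤ i ≤ n. -/
open MvPolynomial

namespace CHproof
open Finset


lemma esymm_zero' {M s : ℕ} (h : M < s) : esymm (Fin M) ℤ s = 0 := by
  rw [esymm, Finset.powersetCard_eq_empty.2 (by simpa using h), Finset.sum_empty]

lemma mesymm_zero_cons {R : Type*} [CommSemiring R] (s : Multiset R) (n : ℕ) :
    (0 ::ₘ s).esymm n = s.esymm n := by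
  cases n with
  | zero => simp [Multiset.esymm, Multiset.powersetCard_zero_left]
  | succ n =>
      rw [Multiset.esymm, Multiset.powersetCard_cons, Multiset.map_add, Multiset.sum_add,
        Multiset.map_map]
      rw [Multiset.map_congr rfl (fun t _ => by simp : ∀ t ∈ Multiset.powersetCard n s,
        ((Multiset.prod ∘ (Multiset.cons 0)) t) = (0:R))]
      simp [Multiset.esymm]

noncomputable def tr1 (N : ℕ) : MvPolynomial (Fin (N + 1)) ℤ →ₐ[ℤ] MvPolynomial (Fin N) ℤ :=
  aeval (Fin.cases 0 X)

lemma univ_val_succ (N : ℕ) :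
    (univ : Finset (Fin (N+1))).val.map (Fin.cases (0 : MvPolynomial (Fin N) ℤ) X)
       = (0 : MvPolynomial (Fin N) ℤ) ::ₘ (univ : Finset (Fin N)).val.map X := by
  rw [Fin.univ_succ, Finset.cons_val, Multiset.map_cons, Fin.cases_zero,
    Finset.map_val, Multiset.map_map]
  congr 1

lemma tr1_esymm (N s : ℕ) : tr1 N (esymm (Fin (N+1)) ℤ s) = esymm (Fin N) ℤ s := by
  rw [tr1, aeval_esymm_eq_multiset_esymm, univ_val_succ, mesymm_zero_cons,
    esymm_eq_multiset_esymm]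


lemma coeff_tr1 (N : ℕ) (D : MvPolynomial (Fin (N+1)) ℤ) (s : Fin N →₀ ℕ) :
    coeff s (tr1 N D) = coeff (Finsupp.cons 0 s) D := by
  induction D using MvPolynomial.induction_on' with
  | add p q hp hq => simp only [map_add, coeff_add, hp, hq]
  | monomial u c =>
      rw [tr1, aeval_monomial, coeff_monomial]
      by_cases h0 : u 0 = 0
      · have hprod : (Finsupp.prod u fun k e => (Fin.cases 0 X k : MvPolynomial (Fin N) ℤ) ^ e)
            = Finsupp.prod (Finsupp.tail u) fun k e => (X k : MvPolynomial (Fin N) ℤ) ^ e := by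
          rw [Finsupp.prod_pow, Finsupp.prod_pow, Fin.prod_univ_succ, Fin.cases_zero, h0,
            pow_zero, one_mul]
          exact Finset.prod_congr rfl (fun k _ => by rw [Fin.cases_succ, Finsupp.tail_apply])
        rw [hprod]
        have : (algebraMap ℤ (MvPolynomial (Fin N) ℤ)) c = C c := rfl
        rw [this, ← monomial_eq, coeff_monomial]
        congr 1
        simp only [eq_iff_iff]
        constructor
        · rintro rfl
          rw [← h0, Finsupp.cons_tail]
        · rintro rfl
          rw [Finsupp.tail_cons]
      · have hprod : (Finsupp.prod u fun k e => (Fin.cases 0 X k : MvPolynomial (Fin N) ℤ) ^ e)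
            = 0 := by
          rw [Finsupp.prod_pow, Fin.prod_univ_succ, Fin.cases_zero, zero_pow h0, zero_mul]
        rw [hprod, mul_zero, coeff_zero, if_neg]
        intro h
        subst h
        exact h0 (Finsupp.cons_zero _ _)

lemma kill (N : ℕ) (D : MvPolynomial (Fin (N+1)) ℤ) (hsym : D.IsSymmetric)
    (hdeg : D.totalDegree ≤ N) (h0 : tr1 N D = 0) : D = 0 := by
  ext s
  rw [coeff_zero]
  have key : ∀ t : Fin (N+1) →₀ ℕ, t 0 = 0 → coeff t D = 0 := by
    intro t ht
    have h := coeff_tr1 N D (Finsupp.tail t)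
    rw [h0, coeff_zero] at h
    rw [← ht, Finsupp.cons_tail] at h
    exact h.symm
  by_contra hne
  have hs : s ∈ D.support := mem_support_iff.2 hne
  have hcard : s.support.card ≤ N := by
    calc s.support.card = ∑ k ∈ s.support, 1 := by rw [Finset.card_eq_sum_ones]
    _ ≤ ∑ k ∈ s.support, s k := Finset.sum_le_sum (fun k hk => Nat.one_le_iff_ne_zero.2
        (Finsupp.mem_support_iff.1 hk))
    _ ≤ D.totalDegree := le_totalDegree hs
    _ ≤ N := hdeg
  by_cases h00 : s 0 = 0
  · exact hne (key s h00)
  · obtain ⟨v, hv⟩ : ∃ v, v ∉ s.support := by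
      by_contra hall
      push_neg at hall
      have : (univ : Finset (Fin (N+1))).card ≤ s.support.card :=
        Finset.card_le_card (fun x _ => hall x)
      rw [Finset.card_univ, Fintype.card_fin] at this
      omega
    have hperm := hsym (Equiv.swap v 0)
    have hco := coeff_rename_mapDomain (Equiv.swap v 0) (Equiv.injective _) D s
    rw [hperm] at hco
    have hz : (Finsupp.mapDomain (Equiv.swap v 0) s) 0 = 0 := by
      have h2 := Finsupp.mapDomain_apply (Equiv.injective (Equiv.swap v 0)) s v
      rw [Equiv.swap_apply_left] at h2
      rw [h2]
      exact Finsupp.notMem_support_iff.1 hv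
    exact hne (hco ▸ key _ hz)

lemma esymm_isHomogeneous (M s : ℕ) : (esymm (Fin M) ℤ s).IsHomogeneous s := by
  rw [esymm]
  apply IsHomogeneous.sum
  intro A hA
  have h : (∏ k ∈ A, (X k : MvPolynomial (Fin M) ℤ)).IsHomogeneous (∑ _k ∈ A, 1) :=
    IsHomogeneous.prod _ _ _ (fun k _ => isHomogeneous_X _ _)
  have hc : (∑ _k ∈ A, 1) = s := by
    rw [Finset.sum_const, smul_eq_mul, mul_one]
    exact (Finset.mem_powersetCard.1 hA).2
  rwa [hc] at h

lemma aeval_isHomogeneous {M N : ℕ} (w : Fin M → ℕ) (f : Fin M → MvPolynomial (Fin N) ℤ)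
    (hf : ∀ m, (f m).IsHomogeneous (w m)) {Q : MvPolynomial (Fin M) ℤ} {d : ℕ}
    (hQ : Q.IsWeightedHomogeneous w d) : (aeval f Q).IsHomogeneous d := by
  rw [Q.as_sum, map_sum]
  apply IsHomogeneous.sum
  intro u hu
  rw [aeval_monomial]
  have hC : (algebraMap ℤ (MvPolynomial (Fin N) ℤ)) (coeff u Q) = C (coeff u Q) := rfl
  rw [hC, Finsupp.prod_pow]
  apply IsHomogeneous.C_mul
  have h := IsHomogeneous.prod univ (fun m => f m ^ u m) (fun m => w m * u m)
    (fun m _ => (hf m).pow (u m))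
  have hd : (∑ m : Fin M, w m * u m) = d := by
    have hw := hQ (mem_support_iff.1 hu)
    rw [← hw, Finsupp.weight_apply, Finsupp.sum_fintype]
    · exact Finset.sum_congr rfl (fun m _ => by rw [smul_eq_mul, mul_comm])
    · intro m; rw [zero_smul]
  rwa [hd] at h

lemma bigS_symm (N i j : ℕ) :
    (aeval (fun k : Fin N => (X k : MvPolynomial (Fin N) ℤ) ^ j)
      (esymm (Fin N) ℤ i)).IsSymmetric := by
  intro e
  have h1 : rename e (aeval (fun k : Fin N => (X k : MvPolynomial (Fin N) ℤ) ^ j)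
      (esymm (Fin N) ℤ i))
      = aeval (fun k : Fin N => (X (e k) : MvPolynomial (Fin N) ℤ) ^ j) (esymm (Fin N) ℤ i) := by
    rw [comp_aeval_apply]
    simp only [map_pow, rename_X]
  rw [h1, show (fun k : Fin N => (X (e k) : MvPolynomial (Fin N) ℤ) ^ j)
      = ((fun k => (X k : MvPolynomial (Fin N) ℤ) ^ j) ∘ ⇑e) from rfl, ← aeval_rename,
    esymm_isSymmetric (Fin N) ℤ i e]

lemma bigS_hom (N i j : ℕ) :
    (aeval (fun k : Fin N => (X k : MvPolynomial (Fin N) ℤ) ^ j)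
      (esymm (Fin N) ℤ i)).IsHomogeneous (i * j) := by
  apply aeval_isHomogeneous (fun _ => j) _ (fun k => isHomogeneous_X_pow k j)
  intro d hd
  have h := esymm_isHomogeneous N i hd
  rw [Finsupp.weight_apply, Finsupp.sum] at h ⊢
  rw [← h]
  simp only [smul_eq_mul, Pi.one_apply, mul_one, Finset.sum_mul]

lemma exists_P (i j N₀ : ℕ) (hN : N₀ = i * j) :
    ∃ P : MvPolynomial (Fin N₀) ℤ,
      P.IsWeightedHomogeneous (fun m : Fin N₀ => (m : ℕ) + 1) N₀ ∧
      aeval (fun k : Fin N₀ => (X k : MvPolynomial (Fin N₀) ℤ) ^ j) (esymm (Fin N₀) ℤ i)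
        = aeval (fun m : Fin N₀ => esymm (Fin N₀) ℤ ((m : ℕ) + 1)) P := by
  classical
  set w : Fin N₀ → ℕ := fun m => (m : ℕ) + 1 with hw
  set S : MvPolynomial (Fin N₀) ℤ :=
    aeval (fun k : Fin N₀ => (X k : MvPolynomial (Fin N₀) ℤ) ^ j) (esymm (Fin N₀) ℤ i) with hS
  obtain ⟨Praw, hPraw⟩ := (esymmAlgHom_fin_bijective ℤ N₀).2 ⟨S, bigS_symm N₀ i j⟩
  have hPraw' : aeval (fun m : Fin N₀ => esymm (Fin N₀) ℤ ((m : ℕ) + 1)) Praw = S := by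
    rw [← esymmAlgHom_apply, hPraw]
  set E : MvPolynomial (Fin N₀) ℤ →ₐ[ℤ] MvPolynomial (Fin N₀) ℤ :=
    aeval (fun m : Fin N₀ => esymm (Fin N₀) ℤ ((m : ℕ) + 1)) with hE
  set P : MvPolynomial (Fin N₀) ℤ := weightedHomogeneousComponent w N₀ Praw with hP
  have hPwh : P.IsWeightedHomogeneous w N₀ :=
    weightedHomogeneousComponent_isWeightedHomogeneous N₀ Praw
  refine ⟨P, hPwh, ?_⟩
  -- homogeneous component argument
  have hkey : ∀ Q : MvPolynomial (Fin N₀) ℤ, (∀ u ∈ Q.support, Finsupp.weight w u ≠ N₀) →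
      homogeneousComponent N₀ (E Q) = 0 := by
    intro Q hQ
    rw [Q.as_sum, map_sum, map_sum]
    apply Finset.sum_eq_zero
    intro u hu
    have hmono : (monomial u (coeff u Q)).IsWeightedHomogeneous w (Finsupp.weight w u) :=
      isWeightedHomogeneous_monomial w u _ rfl
    have hhom : (E (monomial u (coeff u Q))).IsHomogeneous (Finsupp.weight w u) :=
      aeval_isHomogeneous w _ (fun m => esymm_isHomogeneous N₀ ((m : ℕ) + 1)) hmono
    rw [homogeneousComponent_of_mem hhom, if_neg]
    exact fun h => hQ u hu (h ▸ rfl)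
  have hsupp : ∀ u ∈ (Praw - P).support, Finsupp.weight w u ≠ N₀ := by
    intro u hu
    rw [mem_support_iff, coeff_sub, hP, coeff_weightedHomogeneousComponent] at hu
    intro hwu
    rw [if_pos hwu, sub_self] at hu
    exact hu rfl
  have h0 : homogeneousComponent N₀ (E (Praw - P)) = 0 := hkey _ hsupp
  rw [map_sub] at h0
  have hEP : (E P).IsHomogeneous N₀ :=
    aeval_isHomogeneous w _ (fun m => esymm_isHomogeneous N₀ ((m : ℕ) + 1)) hPwh
  have hShom : S.IsHomogeneous N₀ := by
    have h := bigS_hom N₀ i j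
    rwa [← hN] at h
  have hdiff : (S - E P).IsHomogeneous N₀ := hShom.sub hEP
  have : S - E P = 0 := by
    have h1 : homogeneousComponent N₀ (S - E P) = S - E P := by
      rw [homogeneousComponent_of_mem hdiff, if_pos rfl]
    rw [← h1, ← hPraw', map_sub] at *
    exact h0
  have := sub_eq_zero.mp this
  exact this
lemma tr1_pow_comm (N j : ℕ) (hj : 1 ≤ j) (q : MvPolynomial (Fin (N+1)) ℤ) :
    tr1 N (aeval (fun k : Fin (N+1) => (X k : MvPolynomial (Fin (N+1)) ℤ) ^ j) q)
      = aeval (fun k : Fin N => (X k : MvPolynomial (Fin N) ℤ) ^ j) (tr1 N q) := by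
  have h : (tr1 N).comp (aeval (fun k : Fin (N+1) => (X k : MvPolynomial (Fin (N+1)) ℤ) ^ j))
      = (aeval (fun k : Fin N => (X k : MvPolynomial (Fin N) ℤ) ^ j)).comp (tr1 N) := by
    apply MvPolynomial.algHom_ext
    intro k
    simp only [AlgHom.comp_apply, aeval_X, map_pow]
    induction k using Fin.cases with
    | zero => rw [tr1, aeval_X, Fin.cases_zero, zero_pow (by omega), map_zero]
    | succ k' => rw [tr1, aeval_X, Fin.cases_succ, aeval_X]
  calc tr1 N (aeval (fun k : Fin (N+1) => (X k : MvPolynomial (Fin (N+1)) ℤ) ^ j) q)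
      = ((tr1 N).comp (aeval (fun k : Fin (N+1) => (X k : MvPolynomial (Fin (N+1)) ℤ) ^ j))) q :=
        rfl
    _ = _ := by rw [h]; rfl

lemma identity_all (i j N₀ : ℕ) (hj : 1 ≤ j) (hN : N₀ = i * j)
    (P : MvPolynomial (Fin N₀) ℤ)
    (hPwh : P.IsWeightedHomogeneous (fun m : Fin N₀ => (m : ℕ) + 1) N₀)
    (hbase : aeval (fun k : Fin N₀ => (X k : MvPolynomial (Fin N₀) ℤ) ^ j) (esymm (Fin N₀) ℤ i)
        = aeval (fun m : Fin N₀ => esymm (Fin N₀) ℤ ((m : ℕ) + 1)) P) :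
    ∀ N, N₀ ≤ N →
      aeval (fun k : Fin N => (X k : MvPolynomial (Fin N) ℤ) ^ j) (esymm (Fin N) ℤ i)
        = aeval (fun m : Fin N₀ => esymm (Fin N) ℤ ((m : ℕ) + 1)) P := by
  intro N hNN
  induction N, hNN using Nat.le_induction with
  | base => exact hbase
  | succ N hNle ih =>
      set D : MvPolynomial (Fin (N+1)) ℤ :=
        aeval (fun k : Fin (N+1) => (X k : MvPolynomial (Fin (N+1)) ℤ) ^ j)
          (esymm (Fin (N+1)) ℤ i)
        - aeval (fun m : Fin N₀ => esymm (Fin (N+1)) ℤ ((m : ℕ) + 1)) P with hD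
      have hEsym : (aeval (fun m : Fin N₀ => esymm (Fin (N+1)) ℤ ((m : ℕ) + 1)) P).IsSymmetric := by
        rw [← esymmAlgHom_apply]
        exact (esymmAlgHom (Fin (N+1)) ℤ N₀ P).2
      have hsym : D.IsSymmetric := (bigS_symm (N+1) i j).sub hEsym
      have hhom : D.IsHomogeneous N₀ := by
        apply IsHomogeneous.sub
        · have h := bigS_hom (N+1) i j; rwa [← hN] at h
        · exact aeval_isHomogeneous _ _ (fun m => esymm_isHomogeneous (N+1) ((m : ℕ) + 1)) hPwh
      have htr : tr1 N D = 0 := by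
        rw [hD, map_sub, tr1_pow_comm N j hj, tr1_esymm]
        have hE : tr1 N (aeval (fun m : Fin N₀ => esymm (Fin (N+1)) ℤ ((m : ℕ) + 1)) P)
            = aeval (fun m : Fin N₀ => esymm (Fin N) ℤ ((m : ℕ) + 1)) P := by
          rw [comp_aeval_apply]
          exact congrArg (fun f => aeval f P) (funext fun (m : Fin N₀) => tr1_esymm N ((m : ℕ) + 1))
        rw [hE, ← ih, sub_eq_zero]
      have hdeg : D.totalDegree ≤ N := le_trans hhom.totalDegree_le hNle
      have : D = 0 := kill N D hsym hdeg htr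
      rw [hD, sub_eq_zero] at this
      exact this
noncomputable def trMulti (M : ℕ) : (d : ℕ) →
    (MvPolynomial (Fin (M + d)) ℤ →ₐ[ℤ] MvPolynomial (Fin M) ℤ)
  | 0 => AlgHom.id ℤ _
  | (d+1) => (trMulti M d).comp (tr1 (M + d))

lemma trMulti_esymm (M d s : ℕ) :
    trMulti M d (esymm (Fin (M+d)) ℤ s) = esymm (Fin M) ℤ s := by
  induction d with
  | zero => rfl
  | succ d ih =>
      calc trMulti M (d+1) (esymm (Fin (M+(d+1))) ℤ s)
          = trMulti M d (tr1 (M+d) (esymm (Fin ((M+d)+1)) ℤ s)) := rfl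
        _ = esymm (Fin M) ℤ s := by rw [tr1_esymm, ih]

lemma trMulti_pow_comm (M d j : ℕ) (hj : 1 ≤ j) (q : MvPolynomial (Fin (M+d)) ℤ) :
    trMulti M d (aeval (fun k : Fin (M+d) => (X k : MvPolynomial (Fin (M+d)) ℤ) ^ j) q)
      = aeval (fun k : Fin M => (X k : MvPolynomial (Fin M) ℤ) ^ j) (trMulti M d q) := by
  induction d with
  | zero => rfl
  | succ d ih =>
      calc trMulti M (d+1) (aeval (fun k : Fin (M+(d+1)) => (X k : MvPolynomial (Fin (M+(d+1))) ℤ) ^ j) q)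
          = trMulti M d (tr1 (M+d) (aeval (fun k : Fin ((M+d)+1) =>
              (X k : MvPolynomial (Fin ((M+d)+1)) ℤ) ^ j) q)) := rfl
        _ = aeval (fun k : Fin M => (X k : MvPolynomial (Fin M) ℤ) ^ j)
              (trMulti M d (tr1 (M+d) q)) := by rw [tr1_pow_comm _ j hj, ih]
        _ = _ := rfl

lemma esymm_top (i : ℕ) : esymm (Fin i) ℤ i = ∏ k : Fin i, X k := by
  have h : (univ : Finset (Fin i)).card = i := by simp
  have h2 : powersetCard i (univ : Finset (Fin i)) = {univ} := by
    have h3 := Finset.powersetCard_self (univ : Finset (Fin i))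
    rwa [h] at h3
  rw [esymm, h2, Finset.sum_singleton]

lemma rho_P (i j N₀ : ℕ) (hi : 1 ≤ i) (hj : 1 ≤ j) (hN : N₀ = i * j)
    (P : MvPolynomial (Fin N₀) ℤ)
    (hid : ∀ N, N₀ ≤ N →
      aeval (fun k : Fin N => (X k : MvPolynomial (Fin N) ℤ) ^ j) (esymm (Fin N) ℤ i)
        = aeval (fun m : Fin N₀ => esymm (Fin N) ℤ ((m : ℕ) + 1)) P) :
    aeval (fun m : Fin N₀ => if h : (m : ℕ) < i then (X ⟨m, h⟩ : MvPolynomial (Fin i) ℤ) else 0) P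
      = X (⟨i - 1, by omega⟩ : Fin i) ^ j := by
  have hiN : i ≤ N₀ := by
    rw [hN]; calc i = i * 1 := (mul_one i).symm
    _ ≤ i * j := Nat.mul_le_mul_left i hj
  obtain ⟨d, rfl⟩ : ∃ d, N₀ = i + d := ⟨N₀ - i, by omega⟩
  have hid' := hid (i + d) le_rfl
  have happ := congrArg (trMulti i d) hid'
  rw [trMulti_pow_comm i d j hj, trMulti_esymm] at happ
  -- RHS of happ
  have hR : trMulti i d (aeval (fun m : Fin (i+d) => esymm (Fin (i+d)) ℤ ((m : ℕ) + 1)) P)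
      = aeval (fun m : Fin (i+d) => esymm (Fin i) ℤ ((m : ℕ) + 1)) P := by
    rw [comp_aeval_apply]
    exact congrArg (fun f => aeval f P) (funext fun m => trMulti_esymm i d ((m : ℕ) + 1))
  rw [hR] at happ
  -- LHS of happ equals (∏ X k)^j
  have hL : aeval (fun k : Fin i => (X k : MvPolynomial (Fin i) ℤ) ^ j) (esymm (Fin i) ℤ i)
      = (esymm (Fin i) ℤ i) ^ j := by
    rw [esymm_top, map_prod]
    simp only [aeval_X]
    rw [← Finset.prod_pow]
  -- relate RHS to rho
  set ρ : MvPolynomial (Fin (i+d)) ℤ →ₐ[ℤ] MvPolynomial (Fin i) ℤ :=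
    aeval (fun m : Fin (i+d) =>
      if h : (m : ℕ) < i then (X ⟨m, h⟩ : MvPolynomial (Fin i) ℤ) else 0) with hρ
  have hcomp : aeval (fun m : Fin (i+d) => esymm (Fin i) ℤ ((m : ℕ) + 1)) P
      = aeval (fun m' : Fin i => esymm (Fin i) ℤ ((m' : ℕ) + 1)) (ρ P) := by
    have h1 : (aeval (fun m' : Fin i => esymm (Fin i) ℤ ((m' : ℕ) + 1))) (ρ P)
        = aeval (fun m : Fin (i+d) => (aeval (fun m' : Fin i => esymm (Fin i) ℤ ((m' : ℕ) + 1)))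
            ((fun m : Fin (i+d) =>
              if h : (m : ℕ) < i then (X ⟨m, h⟩ : MvPolynomial (Fin i) ℤ) else 0) m)) P :=
      comp_aeval_apply (f := fun m : Fin (i+d) =>
        if h : (m : ℕ) < i then (X ⟨m, h⟩ : MvPolynomial (Fin i) ℤ) else 0) _ P
    rw [hρ] at h1 ⊢
    rw [h1]
    apply congrArg (fun f => aeval f P)
    funext m
    by_cases h : (m : ℕ) < i
    · simp only [dif_pos h, aeval_X]
    · simp only [dif_neg h, map_zero]
      exact esymm_zero' (by omega)
  -- injectivity
  have hinj := esymmAlgHom_fin_injective (R := ℤ) (le_refl i)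
  have hvals : esymmAlgHom (Fin i) ℤ i (ρ P)
      = esymmAlgHom (Fin i) ℤ i (X (⟨i - 1, by omega⟩ : Fin i) ^ j) := by
    apply Subtype.ext
    rw [esymmAlgHom_apply, esymmAlgHom_apply, ← hcomp, ← happ, hL, map_pow, aeval_X]
    congr 2
    simp only []
    omega
  exact hinj hvals

lemma master (i j : ℕ) (hi : 1 ≤ i) (hj : 1 ≤ j) :
    ∃ P : MvPolynomial (Fin (i * j)) ℤ,
      (∀ N : ℕ, i * j ≤ N →
        aeval (fun k : Fin N => (X k : MvPolynomial (Fin N) ℤ) ^ j) (esymm (Fin N) ℤ i)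
          = aeval (fun m : Fin (i * j) => esymm (Fin N) ℤ ((m : ℕ) + 1)) P) ∧
      aeval (fun m : Fin (i * j) => if h : (m : ℕ) < i
          then (X ⟨m, h⟩ : MvPolynomial (Fin i) ℤ) else 0) P
        = X (⟨i - 1, by omega⟩ : Fin i) ^ j := by
  obtain ⟨P, hwh, hbase⟩ := exists_P i j (i * j) rfl
  have hall := identity_all i j (i * j) hj rfl P hwh hbase
  exact ⟨P, hall, rho_P i j (i * j) hi hj rfl P hall⟩


lemma aeval_sub_nilpotent {A : Type*} [CommRing A] {M : ℕ} (f g : Fin M → A)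
    (h : ∀ m, IsNilpotent (f m - g m)) (p : MvPolynomial (Fin M) ℤ) :
    IsNilpotent (aeval f p - aeval g p) := by
  induction p using MvPolynomial.induction_on with
  | C a => simp
  | add p q hp hq =>
      have := (Commute.all _ _).isNilpotent_add hp hq
      simp only [map_add] at *
      convert this using 1
      ring
  | mul_X p m hp =>
      simp only [map_mul, aeval_X]
      have h1 : aeval f p * f m - aeval g p * g m
          = (aeval f p - aeval g p) * f m + aeval g p * (f m - g m) := by ring
      rw [h1]
      exact (Commute.all _ _).isNilpotent_add
        ((Commute.all _ _).isNilpotent_mul_right hp)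
        ((Commute.all _ _).isNilpotent_mul_left (h m))


end CHproof

/-- An `n`-Cayley–Hamilton algebra: a ring `R` equipped with central-valued
operations `σ_1, …, σ_n` (the coefficients of a formal characteristic
polynomial) such that every element satisfies its characteristic polynomial,
together with cyclic invariance `σ_i(ab) = σ_i(ba)`, the multiplicativity rule
`σ_i(σ_j(a)b) = σ_j(a)^i σ_i(b)`, vanishing `σ_i = 0` for `i > n`,
`σ_i(1) = choose n i`, and the Newton/power-sum compatibility: `σ_i(a^j)` is
given by the universal polynomial expressing `e_i(x_1^j, …, x_N^j)` in terms of
the elementary symmetric functions, with `e_m = 0` for `m > n`. -/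
structure IsCHAlgebra (n : ℕ) (R : Type) [Ring R]
    (σ : ℕ → R → Subring.center R) : Prop where
  ch : ∀ a : R, a ^ n + ∑ i ∈ Finset.Icc 1 n,
        (-1 : ℤ) ^ i • ((σ i a : R) * a ^ (n - i)) = 0
  cyc : ∀ (i : ℕ) (a b : R), σ i (a * b) = σ i (b * a)
  scal : ∀ (i j : ℕ) (a b : R), σ i ((σ j a : R) * b) = (σ j a) ^ i * σ i b
  vanish : ∀ i, n < i → ∀ a : R, σ i a = 0
  one : ∀ i ≤ n, σ i (1 : R) = (n.choose i : Subring.center R)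
  pow_rel : ∀ (i j : ℕ) (P : MvPolynomial (Fin (i * j)) ℤ),
    (∀ N : ℕ, i * j ≤ N →
      aeval (fun k : Fin N => (X k : MvPolynomial (Fin N) ℤ) ^ j)
          (esymm (Fin N) ℤ i)
        = aeval (fun m : Fin (i * j) => esymm (Fin N) ℤ ((m : ℕ) + 1)) P) →
    ∀ a : R, σ i (a ^ j)
      = aeval (fun m : Fin (i * j) => σ ((m : ℕ) + 1) a) P

/-- In an `n`-Cayley–Hamilton algebra `R`, an element `r` is nilpotent if and
only if `σ_i(r)` is nilpotent for every `1 ≤ i ≤ n`. -/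
theorem isNilpotent_iff_sigma_isNilpotent (n : ℕ) (R : Type) [Ring R]
    (σ : ℕ → R → Subring.center R) (hR : IsCHAlgebra n R σ) (r : R) :
    IsNilpotent r ↔ ∀ i, 1 ≤ i → i ≤ n → IsNilpotent (σ i r) := by
  constructor
  · intro hr
    obtain ⟨m, hm⟩ := hr
    have hσ0 : ∀ i, 1 ≤ i → σ i (0 : R) = 0 := by
      intro i hi
      have h := hR.scal i (n+1) 0 0
      rw [hR.vanish (n+1) (Nat.lt_succ_self n) 0] at h
      rw [ZeroMemClass.coe_zero, zero_mul, zero_pow (by omega : i ≠ 0), zero_mul] at h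
      exact h
    have hr0 : r ^ (m+1) = 0 := by rw [pow_succ, hm, zero_mul]
    have mainstep : ∀ i, 1 ≤ i → i ≤ n →
        (∀ k, i < k → k ≤ n → IsNilpotent (σ k r)) → IsNilpotent (σ i r) := by
      intro i hi hin IH
      obtain ⟨P, hPid, hPrho⟩ := CHproof.master i (m+1) hi (by omega)
      have hps := hR.pow_rel i (m+1) P hPid r
      rw [hr0, hσ0 i hi] at hps
      set f : Fin (i*(m+1)) → Subring.center R := fun m' => σ ((m' : ℕ) + 1) r with hf
      set g : Fin (i*(m+1)) → Subring.center R :=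
        fun m' => if ((m' : ℕ) < i) then σ ((m' : ℕ) + 1) r else 0 with hg
      have hfg : ∀ m', IsNilpotent (f m' - g m') := by
        intro m'
        by_cases h : (m' : ℕ) < i
        · simp only [hf, hg, if_pos h, sub_self, IsNilpotent.zero]
        · simp only [hf, hg, if_neg h, sub_zero]
          by_cases hn : (m' : ℕ) + 1 ≤ n
          · exact IH _ (by omega) hn
          · rw [hR.vanish _ (by omega) r]; exact IsNilpotent.zero
      have hnil := CHproof.aeval_sub_nilpotent f g hfg P
      rw [← hps, zero_sub] at hnil
      have hgP : aeval g P = (σ i r) ^ (m+1) := by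
        have hcomp : aeval g P = aeval (fun m' : Fin i => σ ((m' : ℕ) + 1) r)
            (aeval (fun m' : Fin (i*(m+1)) => if h : (m' : ℕ) < i
               then (X ⟨m', h⟩ : MvPolynomial (Fin i) ℤ) else 0) P) := by
          rw [comp_aeval_apply (f := fun m' : Fin (i*(m+1)) => if h : (m' : ℕ) < i
               then (X ⟨m', h⟩ : MvPolynomial (Fin i) ℤ) else 0)]
          apply congrArg (fun f => aeval f P)
          funext m'
          by_cases h : (m' : ℕ) < i
          · simp only [dif_pos h, aeval_X, hg, if_pos h]
          · simp only [dif_neg h, map_zero, hg, if_neg h]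
        rw [hcomp, hPrho, map_pow, aeval_X]
        congr 2
        simp only []
        omega
      rw [hgP] at hnil
      have hnil2 := hnil.neg
      rw [neg_neg] at hnil2
      obtain ⟨K, hK⟩ := hnil2
      exact ⟨(m+1) * K, by rw [pow_mul, hK]⟩
    have all : ∀ d i, 1 ≤ i → i ≤ n → n ≤ i + d → IsNilpotent (σ i r) := by
      intro d
      induction d with
      | zero => intro i h1 h2 h3; exact mainstep i h1 h2 (fun k hk1 hk2 => absurd hk1 (by omega))
      | succ d ih =>
          intro i h1 h2 h3
          exact mainstep i h1 h2 (fun k hk1 hk2 => ih k (by omega) hk2 (by omega))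
    exact fun i h1 h2 => all (n - i) i h1 h2 (by omega)
  · intro hσ
    have hch := hR.ch r
    have hr : r ^ n = -∑ i ∈ Finset.Icc 1 n, (-1 : ℤ) ^ i • ((σ i r : R) * r ^ (n - i)) :=
      eq_neg_of_add_eq_zero_left hch
    have hcomm : ∀ (c : Subring.center R) (z : R), Commute (c : R) z :=
      fun c z => ((Subring.mem_center_iff.mp c.2) z).symm
    have hnil : IsNilpotent (r ^ n) := by
      rw [hr]
      apply IsNilpotent.neg
      apply Commute.isNilpotent_sum
      · intro i hi
        rw [Finset.mem_Icc] at hi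
        have hc : IsNilpotent ((σ i r : R)) := by
          obtain ⟨K, hK⟩ := hσ i hi.1 hi.2
          exact ⟨K, by rw [← SubmonoidClass.coe_pow, hK, ZeroMemClass.coe_zero]⟩
        obtain ⟨K, hK⟩ := (hcomm (σ i r) (r ^ (n - i))).isNilpotent_mul_right hc
        exact ⟨K, by rw [smul_pow, hK, smul_zero]⟩
      · intro x y hx hy
        rw [Finset.mem_Icc] at hx hy
        apply Commute.smul_left
        apply Commute.smul_right
        exact Commute.mul_left (hcomm (σ x r) _)
          (Commute.mul_right ((hcomm (σ y r) (r ^ (n - x))).symm)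
            ((Commute.refl r).pow_pow _ _))
    obtain ⟨K, hK⟩ := hnil
    exact ⟨n * K, by rw [pow_mul, hK]⟩
end

section
/- Let R be an n-Cayley–Hamilton algebra whose σ-algebra σ(R) (the central subring generated by all values σ_i(a)) is reduced (has no nonzero nilpotents). Then every nilpotent element r ∈ R satisfies r^n = 0. -/
open MvPolynomial

section CHAuxDev
open Finset

namespace CHAux

open Finset

variable {N' N : ℕ}

/-- The algebra map killing the variables past `N'`. -/
noncomputable def kill (h : N' ≤ N) : MvPolynomial (Fin N) ℤ →ₐ[ℤ] MvPolynomial (Fin N') ℤ :=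
  aeval (fun j : Fin N => if h' : (j : ℕ) < N' then X (⟨j, h'⟩ : Fin N') else 0)

lemma kill_X (h : N' ≤ N) (j : Fin N) :
    kill h (X j) = if h' : (j : ℕ) < N' then X (⟨j, h'⟩ : Fin N') else 0 := by
  simp [kill]

lemma kill_X_castLE (h : N' ≤ N) (j : Fin N') :
    kill h (X (Fin.castLE h j)) = X j := by
  rw [kill_X, dif_pos (by simpa using j.isLt)]
  congr 1

lemma kill_esymm (h : N' ≤ N) (k : ℕ) :
    kill h (esymm (Fin N) ℤ k) = esymm (Fin N') ℤ k := by
  classical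
  rw [esymm, map_sum]
  have hsub : powersetCard k ((univ : Finset (Fin N')).map (Fin.castLEEmb h)) ⊆
      powersetCard k (univ : Finset (Fin N)) :=
    Finset.powersetCard_mono (Finset.subset_univ _)
  have hnot : ∀ t ∈ powersetCard k (univ : Finset (Fin N)),
      t ∉ powersetCard k ((univ : Finset (Fin N')).map (Fin.castLEEmb h)) →
      kill h (∏ i ∈ t, X i) = 0 := by
    intro t ht hnt
    rw [Finset.mem_powersetCard] at ht hnt
    have : ¬ t ⊆ (univ : Finset (Fin N')).map (Fin.castLEEmb h) := fun hc => hnt ⟨hc, ht.2⟩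
    obtain ⟨j, hj, hj'⟩ := Finset.not_subset.1 this
    rw [map_prod]
    refine Finset.prod_eq_zero hj ?_
    rw [kill_X, dif_neg]
    intro h'
    exact hj' (Finset.mem_map.2 ⟨⟨j, h'⟩, Finset.mem_univ _, by ext; simp⟩)
  rw [← Finset.sum_subset hsub hnot, Finset.powersetCard_map, Finset.sum_map, esymm]
  refine Finset.sum_congr rfl fun s hs => ?_
  rw [show (Finset.mapEmbedding (Fin.castLEEmb h)).toEmbedding s = s.map (Fin.castLEEmb h)
      from Finset.mapEmbedding_apply, map_prod, Finset.prod_map]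
  refine Finset.prod_congr rfl fun x hx => ?_
  exact kill_X_castLE h x

lemma exists_mapDomain (h : N' ≤ N) (t : Fin N →₀ ℕ)
    (ht : ∀ j ∈ t.support, (j : ℕ) < N') :
    ∃ s : Fin N' →₀ ℕ, t = Finsupp.mapDomain (Fin.castLE h) s := by
  refine ⟨Finsupp.equivFunOnFinite.symm (fun j : Fin N' => t (Fin.castLE h j)), ?_⟩
  ext j
  by_cases hj : (j : ℕ) < N'
  · have hj' : j = Fin.castLE h ⟨j, hj⟩ := by ext; simp
    rw [hj', Finsupp.mapDomain_apply (Fin.castLE_injective h)]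
    simp
  · rw [Finsupp.mapDomain_notin_range]
    · by_contra h0
      exact hj (ht j (Finsupp.mem_support_iff.2 h0))
    · rintro ⟨x, rfl⟩
      exact hj (by simpa using x.isLt)


lemma coeff_kill (h : N' ≤ N) (f : MvPolynomial (Fin N) ℤ) (s : Fin N' →₀ ℕ) :
    coeff s (kill h f) = coeff (Finsupp.mapDomain (Fin.castLE h) s) f := by
  classical
  induction f using MvPolynomial.induction_on' with
  | add p q hp hq => rw [map_add, coeff_add, coeff_add, hp, hq]
  | monomial t c =>
    by_cases ht : ∀ j ∈ t.support, (j : ℕ) < N'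
    · obtain ⟨s', rfl⟩ := exists_mapDomain h t ht
      have hmon : kill h (monomial (Finsupp.mapDomain (Fin.castLE h) s') c) = monomial s' c := by
        rw [kill, aeval_monomial,
          Finsupp.prod_mapDomain_index_inj (Fin.castLE_injective h), monomial_eq]
        congr 1
        refine Finsupp.prod_congr fun j _ => ?_
        congr 1
        rw [dif_pos (by simpa using j.isLt)]
        congr 1
      rw [hmon, coeff_monomial, coeff_monomial]
      by_cases hss : s' = s
      · simp [hss]
      · rw [if_neg hss,
          if_neg (fun hc => hss (Finsupp.mapDomain_injective (Fin.castLE_injective h) hc))]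
    · push_neg at ht
      obtain ⟨j, hjs, hj⟩ := ht
      have h0 : kill h (monomial t c) = 0 := by
        rw [kill, aeval_monomial]
        have hz : (t.prod fun i k =>
            (if h' : (i : ℕ) < N' then (X (⟨i, h'⟩ : Fin N') : MvPolynomial (Fin N') ℤ)
              else 0) ^ k) = 0 := by
          rw [Finsupp.prod]
          refine Finset.prod_eq_zero hjs ?_
          rw [dif_neg (not_lt.2 hj), zero_pow (Finsupp.mem_support_iff.1 hjs)]
        rw [hz, mul_zero]
      rw [h0, coeff_zero, coeff_monomial, if_neg]
      intro hc
      have hmem : j ∈ (Finsupp.mapDomain (Fin.castLE h) s).support := hc ▸ hjs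
      have h2 := Finsupp.mapDomain_support hmem
      obtain ⟨x, _, hx⟩ := Finset.mem_image.1 h2
      have : (j : ℕ) < N' := by rw [← hx]; simpa using x.isLt
      omega

lemma eq_zero_of_kill_eq_zero (h : N' ≤ N) (f : MvPolynomial (Fin N) ℤ)
    (hsym : f.IsSymmetric) (hdeg : f.totalDegree ≤ N') (hk : kill h f = 0) : f = 0 := by
  classical
  by_contra hf
  obtain ⟨t, ht⟩ := Finset.nonempty_of_ne_empty (MvPolynomial.support_eq_empty.not.2 hf)
  have hcard : t.support.card ≤ N' := by
    calc t.support.card = ∑ _j ∈ t.support, 1 := by rw [Finset.card_eq_sum_ones]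
    _ ≤ ∑ j ∈ t.support, t j :=
        Finset.sum_le_sum fun j hj => Nat.one_le_iff_ne_zero.2 (Finsupp.mem_support_iff.1 hj)
    _ = t.sum fun _ e => e := rfl
    _ ≤ f.totalDegree := le_totalDegree ht
    _ ≤ N' := hdeg
  set T : Finset (Fin N) :=
    (univ : Finset (Fin t.support.card)).map (Fin.castLEEmb (hcard.trans h)) with hT
  have hTcard : t.support.card = T.card := by simp [hT]
  let e := Finset.equivOfCardEq hTcard
  let π : Equiv.Perm (Fin N) := e.extendSubtype
  have hπ : ∀ x ∈ t.support, π x ∈ T := fun x hx => by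
    rw [show π x = ((e ⟨x, hx⟩ : T) : Fin N) from Equiv.extendSubtype_apply_of_mem e x hx]
    exact (e ⟨x, hx⟩).2
  set t' := Finsupp.mapDomain (π : Fin N → Fin N) t with ht'
  have hsupp : ∀ j ∈ t'.support, (j : ℕ) < N' := by
    intro j hj
    rw [ht', Finsupp.mapDomain_support_of_injective π.injective] at hj
    obtain ⟨x, hx, rfl⟩ := Finset.mem_image.1 hj
    have hmem := hπ x hx
    rw [hT, Finset.mem_map] at hmem
    obtain ⟨y, _, hy⟩ := hmem
    rw [← hy]
    have hcoe : ((Fin.castLEEmb (hcard.trans h) y : Fin N) : ℕ) = (y : ℕ) := by simp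
    rw [hcoe]
    exact lt_of_lt_of_le y.isLt hcard
  obtain ⟨s, hs⟩ := exists_mapDomain h t' hsupp
  have hc1 : coeff t' f = coeff t f := by
    conv_lhs => rw [← hsym π]
    exact coeff_rename_mapDomain (π : Fin N → Fin N) π.injective f t
  have hc2 : coeff t' f = 0 := by
    rw [hs, ← coeff_kill h f s, hk, coeff_zero]
  exact (MvPolynomial.mem_support_iff.1 ht) (hc1 ▸ hc2)


lemma isSymmetric_aeval {τ : Type} {Nv : ℕ} (g : τ → MvPolynomial (Fin Nv) ℤ)
    (hg : ∀ j, (g j).IsSymmetric) (f : MvPolynomial τ ℤ) : (aeval g f).IsSymmetric := by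
  intro e
  have h1 := AlgHom.congr_fun
    (comp_aeval g (rename (⇑e) : MvPolynomial (Fin Nv) ℤ →ₐ[ℤ] MvPolynomial (Fin Nv) ℤ)) f
  rw [AlgHom.comp_apply] at h1
  have h2 : (fun i => rename (⇑e) (g i)) = g := funext fun j => hg j e
  rw [h1, h2]

lemma isSymmetric_LHS (Nv m i : ℕ) :
    (aeval (fun k : Fin Nv => (X k : MvPolynomial (Fin Nv) ℤ) ^ m)
      (esymm (Fin Nv) ℤ i)).IsSymmetric := by
  intro e
  have h1 := AlgHom.congr_fun
    (comp_aeval (fun k : Fin Nv => (X k : MvPolynomial (Fin Nv) ℤ) ^ m)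
      (rename (⇑e) : MvPolynomial (Fin Nv) ℤ →ₐ[ℤ] MvPolynomial (Fin Nv) ℤ))
    (esymm (Fin Nv) ℤ i)
  rw [AlgHom.comp_apply] at h1
  rw [h1]
  have h2 : (fun k : Fin Nv => (rename (⇑e)) ((X k : MvPolynomial (Fin Nv) ℤ) ^ m))
      = (fun k : Fin Nv => (X k : MvPolynomial (Fin Nv) ℤ) ^ m) ∘ ⇑e := by
    funext k
    simp [rename_X]
  rw [h2, ← aeval_rename, rename_esymm]

lemma isHomogeneous_esymm (Nv k : ℕ) : (esymm (Fin Nv) ℤ k).IsHomogeneous k := by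
  rw [esymm, ← mem_homogeneousSubmodule]
  refine Submodule.sum_mem _ fun t ht => ?_
  rw [mem_homogeneousSubmodule]
  have hp := MvPolynomial.IsHomogeneous.prod t (fun i => (X i : MvPolynomial (Fin Nv) ℤ))
    (fun _ => 1) (fun i _ => isHomogeneous_X ℤ i)
  have hc : ∑ _i ∈ t, 1 = k := by
    rw [Finset.sum_const, smul_eq_mul, mul_one, (Finset.mem_powersetCard.1 ht).2]
  rwa [hc] at hp

lemma isWeightedHomogeneous_monomial' {τ : Type} (w : τ → ℕ) (t : τ →₀ ℕ) (c : ℤ) :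
    IsWeightedHomogeneous w (monomial t c : MvPolynomial τ ℤ) (Finsupp.weight w t) := by
  classical
  intro d hd
  rw [coeff_monomial] at hd
  by_cases hdt : t = d
  · rw [hdt]
  · rw [if_neg hdt] at hd
    exact absurd rfl hd

lemma isHomogeneous_aeval {τ : Type} {Nv : ℕ} (w : τ → ℕ) (g : τ → MvPolynomial (Fin Nv) ℤ)
    (hg : ∀ j, (g j).IsHomogeneous (w j)) (f : MvPolynomial τ ℤ) (n : ℕ)
    (hf : IsWeightedHomogeneous w f n) : (aeval g f).IsHomogeneous n := by
  classical
  conv_lhs => rw [f.as_sum]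
  rw [map_sum, ← mem_homogeneousSubmodule]
  refine Submodule.sum_mem _ fun t ht => ?_
  rw [mem_homogeneousSubmodule, aeval_monomial]
  have hdeg : Finsupp.weight w t = n := hf (MvPolynomial.mem_support_iff.1 ht)
  have hprod : (t.prod fun i k => g i ^ k).IsHomogeneous (∑ i ∈ t.support, w i * t i) := by
    rw [Finsupp.prod]
    exact MvPolynomial.IsHomogeneous.prod _ _ _ fun i _ => (hg i).pow (t i)
  have hC : ((algebraMap ℤ (MvPolynomial (Fin Nv) ℤ)) (coeff t f)).IsHomogeneous 0 := by
    rw [MvPolynomial.algebraMap_eq]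
    exact isHomogeneous_C _ _
  have := hC.mul hprod
  rw [zero_add] at this
  have hsum : ∑ i ∈ t.support, w i * t i = n := by
    rw [← hdeg, Finsupp.weight_apply, Finsupp.sum]
    exact Finset.sum_congr rfl fun i _ => by rw [smul_eq_mul, mul_comm]
  rwa [hsum] at this

lemma wcomp_monomial {τ : Type} (w : τ → ℕ) (n : ℕ) (t : τ →₀ ℕ) (c : ℤ) :
    weightedHomogeneousComponent w n (monomial t c : MvPolynomial τ ℤ)
      = if Finsupp.weight w t = n then monomial t c else 0 := by
  classical
  ext d
  rw [coeff_weightedHomogeneousComponent]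
  rcases eq_or_ne d t with rfl | hdt
  · rw [coeff_monomial, if_pos rfl, apply_ite (coeff d), coeff_monomial, if_pos rfl, coeff_zero]
  · rw [coeff_monomial, if_neg (Ne.symm hdt), apply_ite (coeff d), coeff_monomial,
      if_neg (Ne.symm hdt), coeff_zero, ite_self, ite_self]

lemma homogeneousComponent_aeval {τ : Type} {Nv : ℕ} (w : τ → ℕ)
    (g : τ → MvPolynomial (Fin Nv) ℤ) (hg : ∀ j, (g j).IsHomogeneous (w j))
    (f : MvPolynomial τ ℤ) (n : ℕ) :
    homogeneousComponent n (aeval g f) = aeval g (weightedHomogeneousComponent w n f) := by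
  classical
  conv_lhs => rw [f.as_sum]
  conv_rhs => rw [f.as_sum]
  rw [map_sum, map_sum, map_sum, map_sum]
  refine Finset.sum_congr rfl fun t ht => ?_
  rw [wcomp_monomial]
  have hhom : (aeval g (monomial t (coeff t f))).IsHomogeneous (Finsupp.weight w t) :=
    isHomogeneous_aeval w g hg _ _ (isWeightedHomogeneous_monomial' w t (coeff t f))
  rw [homogeneousComponent_of_mem ((mem_homogeneousSubmodule _ _).2 hhom)]
  by_cases hw : Finsupp.weight w t = n
  · rw [if_pos hw.symm, if_pos hw]
  · rw [if_neg (Ne.symm hw), if_neg hw, map_zero]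



lemma esymm_eq_zero_of_card_lt {Nv k : ℕ} (h : Nv < k) : esymm (Fin Nv) ℤ k = 0 := by
  rw [esymm, Finset.powersetCard_eq_empty.2 (by simpa using h), Finset.sum_empty]

lemma isWeightedHomogeneous_const_weight {τ : Type} {f : MvPolynomial τ ℤ} {k m : ℕ}
    (hf : f.IsHomogeneous k) : IsWeightedHomogeneous (fun _ : τ => m) f (k * m) := by
  intro d hd
  have h1 : Finsupp.weight (1 : τ → ℕ) d = k := hf hd
  rw [Finsupp.weight_apply] at h1 ⊢
  rw [Finsupp.sum] at h1 ⊢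
  calc ∑ i ∈ d.support, d i • m = (∑ a ∈ d.support, d a • (1 : τ → ℕ) a) * m := by
        rw [Finset.sum_mul]
        exact Finset.sum_congr rfl fun i _ => by
          simp [Pi.one_apply, smul_eq_mul, mul_comm]
  _ = k * m := by rw [h1]

lemma main_poly (i m : ℕ) (hi : 1 ≤ i) (hm : 1 ≤ m) :
    ∃ P : MvPolynomial (Fin (i * m)) ℤ,
      (∀ N : ℕ, i * m ≤ N →
        aeval (fun k : Fin N => (X k : MvPolynomial (Fin N) ℤ) ^ m) (esymm (Fin N) ℤ i)
          = aeval (fun mm : Fin (i * m) => esymm (Fin N) ℤ ((mm : ℕ) + 1)) P) ∧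
      (∀ (A : Type) [CommRing A] (c : Fin (i * m) → A),
        (∀ mm : Fin (i * m), i < (mm : ℕ) + 1 → c mm = 0) →
        ∀ mm0 : Fin (i * m), (mm0 : ℕ) + 1 = i → aeval c P = c mm0 ^ m) := by
  classical
  set d := i * m with hd
  have hid : i ≤ d := by
    calc i = i * 1 := (mul_one i).symm
    _ ≤ i * m := Nat.mul_le_mul_left i hm
  -- notation
  set w : Fin d → ℕ := fun mm => (mm : ℕ) + 1 with hw
  let L : (N : ℕ) → MvPolynomial (Fin N) ℤ := fun N =>
    aeval (fun k : Fin N => (X k : MvPolynomial (Fin N) ℤ) ^ m) (esymm (Fin N) ℤ i)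
  have hLhom : ∀ N, (L N).IsHomogeneous d :=
    fun N => isHomogeneous_aeval (fun _ => m) _
      (fun k => by simpa using (isHomogeneous_X ℤ k).pow m)
      _ _ (isWeightedHomogeneous_const_weight (isHomogeneous_esymm N i))
  have hLsym : ∀ N, (L N).IsSymmetric := fun N => isSymmetric_LHS N m i
  -- the universal polynomial at N = d
  obtain ⟨P0, hP0⟩ := (esymmAlgHom_fin_bijective ℤ d).2 ⟨L d, hLsym d⟩
  have hP0' : aeval (fun mm : Fin d => esymm (Fin d) ℤ ((mm : ℕ) + 1)) P0 = L d := by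
    have := congrArg Subtype.val hP0
    rw [esymmAlgHom_apply] at this
    exact this
  set Q := weightedHomogeneousComponent w d P0 with hQ
  have hQhom : IsWeightedHomogeneous w Q d :=
    weightedHomogeneousComponent_isWeightedHomogeneous d P0
  have hesymmhom : ∀ N : ℕ, ∀ mm : Fin d, (esymm (Fin N) ℤ ((mm : ℕ) + 1)).IsHomogeneous (w mm) :=
    fun N mm => isHomogeneous_esymm N _
  have base : aeval (fun mm : Fin d => esymm (Fin d) ℤ ((mm : ℕ) + 1)) Q = L d := by
    rw [hQ, ← homogeneousComponent_aeval w _ (hesymmhom d) P0 d, hP0',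
      homogeneousComponent_of_mem ((mem_homogeneousSubmodule _ _).2 (hLhom d)), if_pos rfl]
  -- R N
  let Rp : (N : ℕ) → MvPolynomial (Fin N) ℤ := fun N =>
    aeval (fun mm : Fin d => esymm (Fin N) ℤ ((mm : ℕ) + 1)) Q
  have hRhom : ∀ N, (Rp N).IsHomogeneous d :=
    fun N => isHomogeneous_aeval w _ (hesymmhom N) _ _ hQhom
  have hRsym : ∀ N, (Rp N).IsSymmetric :=
    fun N => isSymmetric_aeval _ (fun mm => esymm_isSymmetric _ _ _) Q
  set Idt : ℕ → Prop := fun N => L N = Rp N with hId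
  have hbase : Idt d := base.symm
  -- kill transfers
  have hkillL : ∀ (N' N : ℕ) (h : N' ≤ N), kill h (L N) = L N' := by
    intro N' N h
    have hcomp : (kill h).comp (aeval (fun k : Fin N => (X k : MvPolynomial (Fin N) ℤ) ^ m))
        = (aeval (fun k : Fin N' => (X k : MvPolynomial (Fin N') ℤ) ^ m)).comp (kill h) := by
      refine MvPolynomial.algHom_ext fun k => ?_
      rw [AlgHom.comp_apply, AlgHom.comp_apply, aeval_X, map_pow, kill_X]
      by_cases hk : (k : ℕ) < N'
      · rw [dif_pos hk, aeval_X]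
      · rw [dif_neg hk, map_zero, zero_pow (by omega : m ≠ 0)]
    have := AlgHom.congr_fun hcomp (esymm (Fin N) ℤ i)
    rw [AlgHom.comp_apply, AlgHom.comp_apply, kill_esymm] at this
    exact this
  have hkillR : ∀ (N' N : ℕ) (h : N' ≤ N), kill h (Rp N) = Rp N' := by
    intro N' N h
    have := AlgHom.congr_fun
      (comp_aeval (fun mm : Fin d => esymm (Fin N) ℤ ((mm : ℕ) + 1)) (kill h)) Q
    rw [AlgHom.comp_apply] at this
    rw [this]
    have hfun : (fun i : Fin d => kill h (esymm (Fin N) ℤ ((i : ℕ) + 1)))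
        = fun mm : Fin d => esymm (Fin N') ℤ ((mm : ℕ) + 1) :=
      funext fun mm => by exact kill_esymm h _
    rw [hfun]
  -- downward transfer
  have hdown : ∀ N, Idt (N + 1) → Idt N := by
    intro N hN
    have := congrArg (kill (Nat.le_succ N)) hN
    rwa [hkillL _ _ _, hkillR _ _ _] at this
  have hdownall : ∀ N, Idt N → ∀ M, M ≤ N → Idt M := by
    intro N
    induction N with
    | zero => intro hN M hM; rw [Nat.le_zero.1 hM]; exact hN
    | succ N ih =>
      intro hN M hM
      by_cases hMe : M = N + 1
      · rw [hMe]; exact hN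
      · exact ih (hdown N hN) M (by omega)
  -- upward
  have hup : ∀ N, d ≤ N → Idt N → Idt (N + 1) := by
    intro N hdN hN
    have hdiff : L (N + 1) - Rp (N + 1) = 0 := by
      refine eq_zero_of_kill_eq_zero (Nat.le_succ N) _
        ((hLsym (N+1)).sub (hRsym (N+1)))
        (le_trans ((hLhom (N+1)).sub (hRhom (N+1))).totalDegree_le hdN) ?_
      rw [map_sub, hkillL _ _ _, hkillR _ _ _, hN, sub_self]
    exact sub_eq_zero.1 hdiff
  have hall : ∀ N, d ≤ N → Idt N := by
    intro N hN
    induction N, hN using Nat.le_induction with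
    | base => exact hbase
    | succ N hN ih => exact hup N hN ih
  refine ⟨Q, fun N hN => hall N hN, ?_⟩
  -- specialization part
  have hIdi : Idt i := hdownall d hbase i hid
  -- compute kill hid Q
  have hkillQ : kill hid Q = (X (⟨i - 1, by omega⟩ : Fin i) : MvPolynomial (Fin i) ℤ) ^ m := by
    apply esymmAlgHom_fin_injective ℤ (le_refl i)
    apply Subtype.ext
    rw [esymmAlgHom_apply, esymmAlgHom_apply]
    -- RHS value
    have hrhs : aeval (fun k : Fin i => esymm (Fin i) ℤ ((k : ℕ) + 1))
        ((X (⟨i - 1, by omega⟩ : Fin i) : MvPolynomial (Fin i) ℤ) ^ m)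
        = (esymm (Fin i) ℤ i) ^ m := by
      rw [map_pow, aeval_X]
      congr 2
      show i - 1 + 1 = i
      omega
    rw [hrhs]
    -- LHS value
    have hcomp := AlgHom.congr_fun
      (comp_aeval (fun j : Fin d => if h' : (j : ℕ) < i then X (⟨j, h'⟩ : Fin i) else 0)
        (aeval (fun k : Fin i => esymm (Fin i) ℤ ((k : ℕ) + 1)))) Q
    rw [AlgHom.comp_apply] at hcomp
    have hkill_eq : (aeval (fun k : Fin i => esymm (Fin i) ℤ ((k : ℕ) + 1))) (kill hid Q)
        = aeval (fun mm : Fin d => esymm (Fin i) ℤ ((mm : ℕ) + 1)) Q := by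
      rw [kill, hcomp]
      have hfun : (fun j : Fin d => (aeval fun k : Fin i => esymm (Fin i) ℤ ((k : ℕ) + 1))
            (if h' : (j : ℕ) < i then (X (⟨j, h'⟩ : Fin i) : MvPolynomial (Fin i) ℤ) else 0))
          = fun mm : Fin d => esymm (Fin i) ℤ ((mm : ℕ) + 1) := by
        funext mm
        by_cases hmm : (mm : ℕ) < i
        · rw [dif_pos hmm, aeval_X]
        · rw [dif_neg hmm, map_zero]
          exact (esymm_eq_zero_of_card_lt (by omega : i < (mm : ℕ) + 1)).symm
      rw [hfun]
    rw [hkill_eq]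
    have hLi : aeval (fun mm : Fin d => esymm (Fin i) ℤ ((mm : ℕ) + 1)) Q = L i := hIdi.symm
    rw [hLi]
    -- L i = (esymm (Fin i) ℤ i)^m
    show aeval (fun k : Fin i => (X k : MvPolynomial (Fin i) ℤ) ^ m) (esymm (Fin i) ℤ i)
      = (esymm (Fin i) ℤ i) ^ m
    have hei : esymm (Fin i) ℤ i = ∏ j : Fin i, X j := by
      have hps : Finset.powersetCard i (univ : Finset (Fin i)) = {univ} := by
        have h2 := Finset.powersetCard_self (univ : Finset (Fin i))
        rwa [Finset.card_univ, Fintype.card_fin] at h2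
      rw [esymm, hps, Finset.sum_singleton]
    rw [hei, map_prod]
    simp only [aeval_X]
    rw [Finset.prod_pow]
  -- final evaluation
  intro A _inst c hc mm0 hmm0
  have hcomp2 : (aeval c : MvPolynomial (Fin d) ℤ →ₐ[ℤ] A)
      = (aeval (fun mm : Fin i => c (Fin.castLE hid mm))).comp (kill hid) := by
    refine MvPolynomial.algHom_ext fun j => ?_
    rw [aeval_X, AlgHom.comp_apply, kill_X]
    by_cases hj : (j : ℕ) < i
    · rw [dif_pos hj, aeval_X]
      rfl
    · rw [dif_neg hj, map_zero]
      exact hc j (by omega)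
  have heval := AlgHom.congr_fun hcomp2 Q
  rw [AlgHom.comp_apply, hkillQ, map_pow, aeval_X] at heval
  have hfin : Fin.castLE hid (⟨i - 1, by omega⟩ : Fin i) = mm0 := by
    apply Fin.ext
    simp only [Fin.coe_castLE]
    omega
  rw [heval, hfin]

end CHAux

end CHAuxDev

/-- Let `R` be an `n`-Cayley–Hamilton algebra whose σ-algebra `σ(R)` (the
central subring generated by all values `σ_i(a)`) is reduced.  Then every
nilpotent element `r ∈ R` satisfies `r ^ n = 0`. -/
theorem pow_n_eq_zero_of_isNilpotent_of_reduced_sigmaAlgebra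
    (n : ℕ) (R : Type) [Ring R] (σ : ℕ → R → Subring.center R)
    (hR : IsCHAlgebra n R σ)
    (hred : IsReduced
      (Subring.closure (Set.range fun p : ℕ × R => ((σ p.1 p.2 : R))))) :
    ∀ r : R, IsNilpotent r → r ^ n = 0 := by
  intro r hr
  obtain ⟨m0, hm0⟩ := hr
  set m := m0 + 1 with hmdef
  have hm : 1 ≤ m := Nat.succ_le_succ (Nat.zero_le m0)
  have hrm : r ^ m = 0 := by rw [hmdef, pow_succ, hm0, zero_mul]
  -- σ_i (0) = 0 for i ≥ 1
  have hσ0 : ∀ i : ℕ, 1 ≤ i → σ i (0 : R) = 0 := by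
    intro i hi
    have h1 := hR.scal i (n + 1) 1 0
    rw [hR.vanish (n + 1) (Nat.lt_succ_self n) 1] at h1
    rw [show ((0 : Subring.center R) : R) * (0 : R) = (0 : R) by rw [mul_zero]] at h1
    rw [h1, zero_pow (by omega : i ≠ 0), zero_mul]
  -- σ_k (r) = 0 for all k ≥ 1
  have key : ∀ t : ℕ, ∀ i : ℕ, 1 ≤ i → n + 1 - i ≤ t → ∀ k, i ≤ k → σ k r = 0 := by
    intro t
    induction t with
    | zero =>
      intro i hi hit k hik
      exact hR.vanish k (by omega) r
    | succ t ih =>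
      intro i hi hit k hik
      by_cases hni : n + 1 ≤ i
      · exact hR.vanish k (by omega) r
      · by_cases hk : i < k
        · exact ih (i + 1) (by omega) (by omega) k hk
        · have hki : k = i := by omega
          subst hki
          have hIH : ∀ k', k + 1 ≤ k' → σ k' r = 0 := ih (k + 1) (by omega) (by omega)
          have hkm : k ≤ k * m := Nat.le_mul_of_pos_right k (by omega)
          obtain ⟨P, hPid, hPev⟩ := CHAux.main_poly k m hi hm
          have hrel := hR.pow_rel k m P hPid r
          rw [hrm, hσ0 k hi] at hrel
          have hc0 : ∀ mm : Fin (k * m), k < (mm : ℕ) + 1 →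
              σ ((mm : ℕ) + 1) r = 0 := fun mm hmm => hIH _ (by omega)
          have hmm0 : ((⟨k - 1, by omega⟩ : Fin (k * m)) : ℕ) + 1 = k := by
            show k - 1 + 1 = k
            omega
          have hev := hPev (Subring.center R)
            (fun mm : Fin (k * m) => σ ((mm : ℕ) + 1) r) hc0 ⟨k - 1, by omega⟩ hmm0
          have hk1 : σ (k - 1 + 1) r = σ k r := by rw [(by omega : k - 1 + 1 = k)]
          have hev2 : aeval (fun mm : Fin (k * m) => σ ((mm : ℕ) + 1) r) P
              = (σ k r) ^ m := by
            rw [← hk1]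
            exact hev
          rw [← hrel] at hev2
          have hvm : ((σ k r : R)) ^ m = 0 := by
            have h2 := congrArg Subtype.val hev2.symm
            rw [SubmonoidClass.coe_pow] at h2
            simpa using h2
          have hmem : (σ k r : R) ∈
              Subring.closure (Set.range fun p : ℕ × R => ((σ p.1 p.2 : R))) :=
            Subring.subset_closure ⟨(k, r), rfl⟩
          set x : (Subring.closure (Set.range fun p : ℕ × R => ((σ p.1 p.2 : R)))) :=
            ⟨(σ k r : R), hmem⟩ with hx
          have hxm : x ^ m = 0 := by
            apply Subtype.ext
            rw [SubmonoidClass.coe_pow]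
            simpa using hvm
          have hx0 : x = 0 := IsNilpotent.eq_zero ⟨m, hxm⟩
          apply Subtype.ext
          show ((σ k r : R)) = 0
          exact congrArg Subtype.val hx0
  have hall : ∀ k, 1 ≤ k → σ k r = 0 := key n 1 le_rfl (by omega)
  have hch := hR.ch r
  have hz : ∀ i ∈ Finset.Icc 1 n, (-1 : ℤ) ^ i • ((σ i r : R) * r ^ (n - i)) = 0 := by
    intro i hi
    rw [hall i (Finset.mem_Icc.1 hi).1]
    show (-1 : ℤ) ^ i • (((0 : Subring.center R) : R) * r ^ (n - i)) = 0
    rw [ZeroMemClass.coe_zero, zero_mul, smul_zero]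
  rw [Finset.sum_eq_zero hz, add_zero] at hch
  exact hch
end

section
/- Let F be a field of characteristic p and G ⊇ F a field extension with G purely inseparable over F. If N : G → F is a multiplicative polynomial map homogeneous of degree n (in particular N(ab) = N(a)N(b) and N(λa) = λ^n N(a) for λ ∈ F), and for some a ∈ G the minimal h with a^{p^h} ∈ F is h, then p^h divides n and N(a) = a^n (which lies in F). -/
/-- Let `F ⊆ G` be a purely inseparable field extension of characteristic `p`
and `N : G → F` a multiplicative map homogeneous of degree `n` (so
`N(ab) = N(a)N(b)`, `N(1) = 1` and `N(λ • a) = λ^n N(a)` for `λ ∈ F`).  If for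
some `a ∈ G` the integer `h` is minimal with `a^{p^h} ∈ F`, then `p^h` divides
`n` and `N(a) = a^n` (which therefore lies in `F`). -/
theorem norm_purelyInseparable_eq_pow
    (F G : Type) [Field F] [Field G] [Algebra F G]
    (p : ℕ) (hp : p.Prime) [CharP F p] [IsPurelyInseparable F G]
    (n : ℕ) (N : G → F)
    (hmul : ∀ x y : G, N (x * y) = N x * N y)
    (hone : N 1 = 1)
    (hhom : ∀ (c : F) (x : G), N (c • x) = c ^ n * N x)
    (a : G) (h : ℕ)
    (hmem : a ^ p ^ h ∈ (algebraMap F G).range)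
    (hmin : ∀ h' < h, a ^ p ^ h' ∉ (algebraMap F G).range) :
    (p ^ h ∣ n) ∧ algebraMap F G (N a) = a ^ n := by
  haveI : Fact p.Prime := ⟨hp⟩
  haveI : CharP G p := charP_of_injective_algebraMap (algebraMap F G).injective p
  obtain ⟨b, hb⟩ := hmem
  have hNpow : ∀ (x : G) (k : ℕ), N (x ^ k) = N x ^ k := by
    intro x k
    induction k with
    | zero => simpa using hone
    | succ k ih => rw [pow_succ, hmul, ih, pow_succ]
  have key1 : N a ^ p ^ h = b ^ n := by
    rw [← hNpow, ← hb, Algebra.algebraMap_eq_smul_one, hhom, hone, mul_one]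
  have key2 : algebraMap F G (N a) = a ^ n := by
    have hG : (algebraMap F G (N a)) ^ p ^ h = (a ^ n) ^ p ^ h := by
      rw [← map_pow, key1, map_pow, hb, ← pow_mul, ← pow_mul, Nat.mul_comm]
    have hz : (algebraMap F G (N a) - a ^ n) ^ p ^ h = 0 := by
      rw [sub_pow_char_pow, hG, sub_self]
    have := pow_eq_zero_iff (pow_ne_zero h hp.ne_zero) |>.mp hz
    exact sub_eq_zero.mp this
  refine ⟨?_, key2⟩
  rcases Nat.eq_zero_or_pos h with rfl | hpos
  · simp
  · have ha : a ≠ 0 := by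
      intro h0
      exact hmin 0 hpos ⟨0, by simp [h0, (pow_pos hp.pos 0).ne']⟩
    set K := (algebraMap F G).fieldRange with hK
    have hK1 : (a : G) ^ (p ^ h) ∈ K := ⟨b, hb⟩
    have hK2 : (a : G) ^ n ∈ K := ⟨N a, key2⟩
    set g := Nat.gcd (p ^ h) n with hg
    set u := Int.gcdA (p ^ h) n with hu
    set v := Int.gcdB (p ^ h) n with hv
    have hbez : (g : ℤ) = (p ^ h : ℕ) * u + (n : ℕ) * v := by
      have h0 := Int.gcd_eq_gcd_ab (p ^ h : ℕ) (n : ℕ)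
      rw [hg, hu, hv]
      push_cast at h0 ⊢
      exact_mod_cast h0
    have hzg : a ^ (g : ℤ) = (a ^ (p ^ h)) ^ u * (a ^ n) ^ v := by
      rw [hbez, zpow_add₀ ha, zpow_mul, zpow_mul, zpow_natCast, zpow_natCast]
    have hmemg : a ^ g ∈ K := by
      rw [← zpow_natCast, hzg]
      exact mul_mem (zpow_mem hK1 u) (zpow_mem hK2 v)
    have hgd : g ∣ p ^ h := Nat.gcd_dvd_left _ _
    obtain ⟨e, he_le, hge⟩ := (Nat.dvd_prime_pow hp).mp hgd
    rcases lt_or_eq_of_le he_le with hlt | heq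
    · exact absurd (hge ▸ hmemg) (fun hc => hmin e hlt (by obtain ⟨x, hx⟩ := hc; exact ⟨x, hx⟩))
    · rw [← heq, ← hge]
      exact Nat.gcd_dvd_right _ _
end

section
/- Let F be an infinite field and N : M_m(G) → F a multiplicative polynomial map (over F). Then N is trivial on all elementary matrices: N(1 + α e_{ij}) = 1 for all i ≠ j and α ∈ G. -/
/-- Auxiliary: a polynomial over an infinite field satisfying the exponential
functional equation with value 1 at 0 is constantly 1. -/
lemma poly_exp_eq_one {F : Type} [Field F] [Infinite F] (q : Polynomial F)
    (hadd : ∀ s t : F, q.eval (s + t) = q.eval s * q.eval t)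
    (h0 : q.eval 0 = 1) : ∀ t : F, q.eval t = 1 := by
  have hcomp : q.comp (Polynomial.C 2 * Polynomial.X) = q * q := by
    apply Polynomial.funext
    intro t
    simp only [Polynomial.eval_comp, Polynomial.eval_mul, Polynomial.eval_C,
      Polynomial.eval_X]
    rw [two_mul, hadd]
  have hdeg : q.natDegree = 0 := by
    have hle : ((Polynomial.C 2 * Polynomial.X : Polynomial F)).natDegree ≤ 1 := by
      refine le_trans Polynomial.natDegree_mul_le ?_
      simp
    have h1 : (q.comp (Polynomial.C 2 * Polynomial.X)).natDegree ≤ q.natDegree := by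
      refine le_trans Polynomial.natDegree_comp_le ?_
      calc q.natDegree * (Polynomial.C 2 * Polynomial.X : Polynomial F).natDegree
          ≤ q.natDegree * 1 := by gcongr
        _ = q.natDegree := mul_one _
    have h2 : (q * q).natDegree = q.natDegree + q.natDegree := by
      have hq : q ≠ 0 := by
        intro h; rw [h] at h0; simp at h0
      exact Polynomial.natDegree_mul hq hq
    rw [hcomp, h2] at h1
    omega
  intro t
  have hC := Polynomial.eq_C_of_natDegree_eq_zero hdeg
  rw [hC] at h0 ⊢
  simpa using h0

/-- Let `F` be an infinite field, `G` a commutative `F`-algebra and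
`N : M_m(G) → F` a multiplicative polynomial map (polynomiality is expressed by
saying that along each additive one-parameter subgroup of elementary matrices
`t ↦ N(1 + t•α e_{ij})` is given by a polynomial in `t`).  Then `N` is trivial
on all elementary matrices: `N(1 + α e_{ij}) = 1` for all `i ≠ j`, `α ∈ G`. -/
theorem norm_trivial_on_elementary_matrices
    (F : Type) [Field F] [Infinite F]
    (G : Type) [CommRing G] [Algebra F G] (m : ℕ)
    (N : Matrix (Fin m) (Fin m) G → F)
    (hmul : ∀ A B, N (A * B) = N A * N B)
    (hone : N 1 = 1)
    (hpoly : ∀ (i j : Fin m), i ≠ j → ∀ α : G, ∃ q : Polynomial F,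
      ∀ t : F, N (1 + Matrix.single i j (t • α)) = q.eval t) :
    ∀ (i j : Fin m), i ≠ j → ∀ α : G,
      N (1 + Matrix.single i j α) = 1 := by
  classical
  intro i j hij α
  obtain ⟨q, hq⟩ := hpoly i j hij α
  have key : ∀ a b : G, (1 + Matrix.single i j a) * (1 + Matrix.single i j b)
      = 1 + Matrix.single i j (a + b) := by
    intro a b
    have hz : Matrix.single i j a * Matrix.single i j b = 0 :=
      Matrix.single_mul_single_of_ne (c := a) i j i (Ne.symm hij) b
    rw [Matrix.single_add, mul_add, add_mul, add_mul, hz]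
    simp [add_assoc]
  have hadd : ∀ s t : F, q.eval (s + t) = q.eval s * q.eval t := by
    intro s t
    rw [← hq, ← hq, ← hq, ← hmul, key, ← add_smul]
  have h0 : q.eval 0 = 1 := by
    rw [← hq]
    simp [hone]
  have := poly_exp_eq_one q hadd h0 1
  rw [← hq 1, one_smul] at this
  exact this
end

section
/- Let S be an n-Cayley–Hamilton algebra with σ-algebra A, and M a two-sided algebra ideal of S such that S/M is simple. Then 𝔪 := M ∩ A is a maximal ideal of A. -/
open MvPolynomial

private theorem CH_exists_inv (n : ℕ) (S : Type) [Ring S] (σ : ℕ → S → Subring.center S)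
    (hch : ∀ a : S, a ^ n + ∑ i ∈ Finset.Icc 1 n,
        (-1 : ℤ) ^ i • ((σ i a : S) * a ^ (n - i)) = 0)
    (A : Subring S)
    (hA : A = Subring.closure (Set.range fun p : ℕ × S => ((σ p.1 p.2 : S))))
    (M : Ideal S)
    (hMright : ∀ x ∈ M, ∀ r : S, x * r ∈ M)
    (hsimple : ∀ J : Ideal S, (∀ x ∈ J, ∀ r : S, x * r ∈ J) →
        M ≤ J → J = M ∨ J = ⊤)
    (x : S) (hxA : x ∈ A) (hxM : x ∉ M) :
    ∃ c ∈ A, 1 - c * x ∈ M := by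
  have hAle : A ≤ Subring.center S := by
    rw [hA]
    exact Subring.closure_le.mpr (by rintro _ ⟨p, rfl⟩; exact SetLike.coe_mem _)
  have gx : ∀ g : S, g * x = x * g := fun g => Subring.mem_center_iff.mp (hAle hxA) g
  -- J = M + span {x} is two-sided, contains M, contains x ∉ M, hence ⊤
  set J : Ideal S := M ⊔ Ideal.span {x} with hJ
  have hJr : ∀ z ∈ J, ∀ r : S, z * r ∈ J := by
    intro z hz r
    rcases Submodule.mem_sup.mp hz with ⟨m, hm, t, ht, rfl⟩
    rcases Submodule.mem_span_singleton.mp ht with ⟨s, rfl⟩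
    have : (m + s • x) * r = m * r + (s * r) • x := by
      simp only [smul_eq_mul, add_mul, mul_assoc]
      rw [gx r]
    rw [this]
    exact Submodule.add_mem _ (Submodule.mem_sup_left (hMright m hm r))
      (Submodule.mem_sup_right
        (Submodule.smul_mem _ _ (Submodule.mem_span_singleton_self x)))
  have hJtop : J = ⊤ := by
    rcases hsimple J hJr le_sup_left with h | h
    · exfalso
      have hxJ : x ∈ J := Submodule.mem_sup_right (Submodule.mem_span_singleton_self x)
      rw [h] at hxJ
      exact hxM hxJ
    · exact h
  obtain ⟨m, hm, t, ht, h1⟩ := Submodule.mem_sup.mp (hJtop ▸ Submodule.mem_top : (1:S) ∈ J)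
  obtain ⟨s, rfl⟩ := Submodule.mem_span_singleton.mp ht
  have h1M : 1 - s * x ∈ M := by
    have : (1:S) - s * x = m := by rw [← h1]; simp [smul_eq_mul]
    rw [this]; exact hm
  -- Cayley–Hamilton for s, multiplied by x^n
  set u : S := s * x with hu
  have hcomm : Commute s x := (gx s)
  have hpow : ∀ k, k ≤ n → s ^ k * x ^ n = u ^ k * x ^ (n - k) := by
    intro k hk
    rw [hu, hcomm.mul_pow, mul_assoc, ← pow_add, Nat.add_sub_cancel' hk]
  have hE : u ^ n + ∑ i ∈ Finset.Icc 1 n,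
      (-1 : ℤ) ^ i • ((σ i s : S) * (u ^ (n - i) * x ^ i)) = 0 := by
    have h0 : (s ^ n + ∑ i ∈ Finset.Icc 1 n,
        (-1 : ℤ) ^ i • ((σ i s : S) * s ^ (n - i))) * x ^ n = 0 := by
      rw [hch s, zero_mul]
    rw [add_mul, Finset.sum_mul] at h0
    have hterm : ∀ i ∈ Finset.Icc 1 n,
        ((-1 : ℤ) ^ i • ((σ i s : S) * s ^ (n - i))) * x ^ n
          = (-1 : ℤ) ^ i • ((σ i s : S) * (u ^ (n - i) * x ^ i)) := by
      intro i hi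
      have hin : i ≤ n := (Finset.mem_Icc.mp hi).2
      rw [smul_mul_assoc, mul_assoc, hpow (n - i) (Nat.sub_le n i),
        Nat.sub_sub_self hin]
    rw [Finset.sum_congr rfl hterm, hpow n le_rfl, Nat.sub_self, pow_zero, mul_one] at h0
    exact h0
  -- 1 - u^k ∈ M for all k
  have hupow : ∀ k : ℕ, (1 : S) - u ^ k ∈ M := by
    intro k
    have hu1 : u - 1 ∈ M := by
      rw [hu, ← neg_sub (1 : S) (s * x)]
      exact neg_mem h1M
    have : (∑ i ∈ Finset.range k, u ^ i) * (u - 1) ∈ M :=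
      Submodule.smul_mem M _ hu1
    rw [geom_sum_mul] at this
    rw [← neg_sub (u ^ k) (1 : S)]
    exact neg_mem this
  -- D := 1 + ∑ (-1)^i • (σ i s * x^i) ∈ M
  set D : S := 1 + ∑ i ∈ Finset.Icc 1 n,
      (-1 : ℤ) ^ i • ((σ i s : S) * x ^ i) with hD
  have hDM : D ∈ M := by
    have hdiff : D - (u ^ n + ∑ i ∈ Finset.Icc 1 n,
        (-1 : ℤ) ^ i • ((σ i s : S) * (u ^ (n - i) * x ^ i)))
        = (1 - u ^ n) + ∑ i ∈ Finset.Icc 1 n,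
          (-1 : ℤ) ^ i • ((σ i s : S) * ((1 - u ^ (n - i)) * x ^ i)) := by
      rw [hD]
      simp only [sub_mul, one_mul, mul_sub, smul_sub, Finset.sum_sub_distrib]
      abel
    have hmem : (1 - u ^ n) + ∑ i ∈ Finset.Icc 1 n,
        (-1 : ℤ) ^ i • ((σ i s : S) * ((1 - u ^ (n - i)) * x ^ i)) ∈ M := by
      refine add_mem (hupow n) (Submodule.sum_mem _ fun i _ => ?_)
      exact zsmul_mem (Submodule.smul_mem M _ (hMright _ (hupow (n - i)) (x ^ i))) _
    rw [← hdiff] at hmem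
    rwa [hE, sub_zero] at hmem
  -- c := -∑ (-1)^i • (σ i s * x^(i-1))
  refine ⟨-∑ i ∈ Finset.Icc 1 n, (-1 : ℤ) ^ i • ((σ i s : S) * x ^ (i - 1)), ?_, ?_⟩
  · refine neg_mem (Subring.sum_mem _ fun i _ => ?_)
    refine zsmul_mem (A.mul_mem ?_ (A.pow_mem hxA _)) _
    rw [hA]; exact Subring.subset_closure ⟨(i, s), rfl⟩
  · have hcx : (-∑ i ∈ Finset.Icc 1 n, (-1 : ℤ) ^ i • ((σ i s : S) * x ^ (i - 1))) * x
        = -∑ i ∈ Finset.Icc 1 n, (-1 : ℤ) ^ i • ((σ i s : S) * x ^ i) := by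
      rw [neg_mul, Finset.sum_mul]
      congr 1
      refine Finset.sum_congr rfl fun i hi => ?_
      have hi1 : 1 ≤ i := (Finset.mem_Icc.mp hi).1
      rw [smul_mul_assoc, mul_assoc, ← pow_succ, Nat.sub_add_cancel hi1]
    rw [hcx]
    have : (1 : S) - -∑ i ∈ Finset.Icc 1 n, (-1 : ℤ) ^ i • ((σ i s : S) * x ^ i) = D := by
      rw [hD, sub_neg_eq_add]
    rw [this]; exact hDM

/-- Let `S` be an `n`-Cayley–Hamilton algebra with σ-algebra `A`, and `M` a
two-sided ideal of `S` such that `S/M` is simple (i.e. `M` is proper and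
maximal among two-sided ideals).  Then `𝔪 := M ∩ A` is a maximal ideal
of `A`. -/
theorem contraction_of_simple_quotient_isMaximal
    (n : ℕ) (S : Type) [Ring S] (σ : ℕ → S → Subring.center S)
    (hS : IsCHAlgebra n S σ)
    (A : Subring S)
    (hA : A = Subring.closure (Set.range fun p : ℕ × S => ((σ p.1 p.2 : S))))
    (M : Ideal S)
    (hMright : ∀ x ∈ M, ∀ r : S, x * r ∈ M)
    (hMne : M ≠ ⊤)
    (hsimple : ∀ J : Ideal S, (∀ x ∈ J, ∀ r : S, x * r ∈ J) →
        M ≤ J → J = M ∨ J = ⊤) :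
    (Ideal.comap A.subtype M).IsMaximal := by
  rw [Ideal.isMaximal_def]
  constructor
  · intro h
    have h1 : (1 : A) ∈ Ideal.comap A.subtype M := h ▸ Submodule.mem_top
    rw [Ideal.mem_comap, map_one] at h1
    exact hMne ((Ideal.eq_top_iff_one M).mpr h1)
  · intro I hI
    obtain ⟨x, hxI, hxm⟩ := SetLike.exists_of_lt hI
    have hxM : (x : S) ∉ M := fun h => hxm (Ideal.mem_comap.mpr h)
    obtain ⟨c, hcA, hcM⟩ :=
      CH_exists_inv n S σ hS.ch A hA M hMright hsimple (x : S) x.2 hxM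
    have h1 : (1 : A) - ⟨c, hcA⟩ * x ∈ Ideal.comap A.subtype M := by
      rw [Ideal.mem_comap]
      exact hcM
    rw [Ideal.eq_top_iff_one]
    have := I.add_mem (hI.le h1) (I.mul_mem_left ⟨c, hcA⟩ hxI)
    rwa [sub_add_cancel] at this
end
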